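/- arXiv:2604.08843 — 2 statements merged into one kernel-verified Lean document; each statement's English description precedes it below -/
import Mathlib

section
/- Let q be an odd prime power and let C be an [n,k] linear code over F_q of type (E_{o,ns}) with ℓ = dim Hull_E(C) < k. Then the length of the shortest k-dimensional Euclidean hull embeddings of C (i.e., the shortest Euclidean self-orthogonal embeddings preserving dimension k) is n + k − ℓ + 1. -/
open Matrix

/-- The Euclidean dual of a code `C` in `F^ι`. -/
def dualE {F : Type*} [Field F] {ι : Type*} [Fintype ι]
    (C : Submodule F (ι → F)) : Submodule F (ι → F) where
  carrier := {v | ∀ u ∈ C, u ⬝ᵥ v = 0}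
  add_mem' := fun {a b} ha hb u hu => by
    rw [dotProduct_add, ha u hu, hb u hu, add_zero]
  zero_mem' := fun u _ => dotProduct_zero u
  smul_mem' := fun c a ha u hu => by
    rw [dotProduct_smul, ha u hu, smul_zero]

/-- The Euclidean hull of a code: `Hull_E(C) = C ⊓ C^{⊥_E}`. -/
def hullE {F : Type*} [Field F] {ι : Type*} [Fintype ι]
    (C : Submodule F (ι → F)) : Submodule F (ι → F) :=
  C ⊓ dualE C

/-- `G` is a generator matrix of the code `C`: its rows form a basis of `C`. -/
def IsGenMat {F : Type*} [Field F] {κ ι : Type*}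
    (C : Submodule F (ι → F)) (G : Matrix κ ι F) : Prop :=
  LinearIndependent F (fun i => G i) ∧ Submodule.span F (Set.range fun i => G i) = C

/-- `Ct` (a code of length `n + |ι|`) is a `t`-dimensional Euclidean hull embedding of the
`[n,k]` code `C`: `dim Hull_E(Ct) = t` and `Ct` has a generator matrix `[G | D]` where
`G` is a generator matrix of `C`. -/
def IsHullEmbE {F : Type*} [Field F] {n : ℕ} (k : ℕ) {ι : Type*} [Fintype ι]
    (C : Submodule F (Fin n → F)) (Ct : Submodule F ((Fin n ⊕ ι) → F)) (t : ℕ) : Prop :=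
  Module.finrank F (hullE Ct) = t ∧
  ∃ (G : Matrix (Fin k) (Fin n) F) (D : Matrix (Fin k) ι F),
    IsGenMat C G ∧ IsGenMat Ct (Matrix.fromCols G D)

/-- Two square matrices are congruent if `D * A * Dᵀ = B` for some invertible `D`. -/
def MatCongruent {F : Type*} [Field F] {k : ℕ} (A B : Matrix (Fin k) (Fin k) F) : Prop :=
  ∃ D : Matrix (Fin k) (Fin k) F, IsUnit D ∧ D * A * Dᵀ = B


/-! ### Auxiliary lemmas -/

section Aux

lemma mem_dualE {F : Type*} [Field F] {ι : Type*} [Fintype ι]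
    {C : Submodule F (ι → F)} {v : ι → F} :
    v ∈ dualE C ↔ ∀ u ∈ C, u ⬝ᵥ v = 0 := Iff.rfl

lemma key_dot {F : Type*} [Field F] {k n : ℕ} (G : Matrix (Fin k) (Fin n) F)
    (x y : Fin k → F) : (y ᵥ* G) ⬝ᵥ (x ᵥ* G) = y ⬝ᵥ ((G * Gᵀ) *ᵥ x) := by
  rw [← Matrix.mulVec_mulVec, Matrix.dotProduct_mulVec, ← Matrix.mulVec_transpose,
      ← Matrix.mulVec_transpose]

lemma hullE_eq_map {F : Type*} [Field F] {k n : ℕ} (G : Matrix (Fin k) (Fin n) F) :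
    hullE (Submodule.span F (Set.range fun i => G i))
      = Submodule.map (Matrix.vecMulLinear G) (LinearMap.ker (Matrix.mulVecLin (G * Gᵀ))) := by
  have hC : Submodule.span F (Set.range fun i => G i) = LinearMap.range G.vecMulLinear := by
    rw [range_vecMulLinear]
    rfl
  ext v
  simp only [hullE, Submodule.mem_inf, mem_dualE, hC, LinearMap.mem_range,
    Submodule.mem_map, LinearMap.mem_ker]
  constructor
  · rintro ⟨⟨x, rfl⟩, hdual⟩
    refine ⟨x, ?_, rfl⟩
    rw [Matrix.mulVecLin_apply]
    funext j
    have := hdual (Pi.single j 1 ᵥ* G) ⟨Pi.single j 1, rfl⟩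
    simp only [Matrix.vecMulLinear_apply] at this
    rw [key_dot, single_dotProduct, one_mul] at this
    simpa using this
  · rintro ⟨x, hx, rfl⟩
    refine ⟨⟨x, rfl⟩, ?_⟩
    rintro u ⟨y, rfl⟩
    simp only [Matrix.vecMulLinear_apply]
    rw [key_dot, Matrix.mulVecLin_apply] at *
    rw [hx, dotProduct_zero]

lemma finrank_hullE_add_rank {F : Type*} [Field F] {k n : ℕ} (G : Matrix (Fin k) (Fin n) F)
    (hi : LinearIndependent F fun i => G i) :
    Module.finrank F (hullE (Submodule.span F (Set.range fun i => G i))) + (G * Gᵀ).rank = k := by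
  have hinj : Function.Injective G.vecMulLinear := by
    rw [Matrix.coe_vecMulLinear]
    exact Matrix.vecMul_injective_iff.2 hi
  rw [hullE_eq_map]
  rw [← LinearEquiv.finrank_eq
    (Submodule.equivMapOfInjective G.vecMulLinear hinj (LinearMap.ker (Matrix.mulVecLin (G * Gᵀ))))]
  have h2 := LinearMap.finrank_range_add_finrank_ker (Matrix.mulVecLin (G * Gᵀ))
  rw [Module.finrank_pi] at h2
  rw [Matrix.rank]
  simp only [Fintype.card_fin] at h2
  omega

/-- dot product with a fixed vector on the right, as a linear map -/
def dotRight {F : Type*} [Field F] {ι : Type*} [Fintype ι] (w : ι → F) :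
    (ι → F) →ₗ[F] F where
  toFun := fun u => u ⬝ᵥ w
  map_add' := fun a b => add_dotProduct a b w
  map_smul' := fun c a => smul_dotProduct c a w

lemma span_le_dualE {F : Type*} [Field F] {k : ℕ} {ι : Type*} [Fintype ι]
    {M : Matrix (Fin k) ι F} (h : M * Mᵀ = 0) :
    Submodule.span F (Set.range fun i => M i)
      ≤ dualE (Submodule.span F (Set.range fun i => M i)) := by
  rw [Submodule.span_le]
  rintro _ ⟨j, rfl⟩
  intro u hu
  have : Submodule.span F (Set.range fun i => M i) ≤ LinearMap.ker (dotRight (M j)) := by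
    rw [Submodule.span_le]
    rintro _ ⟨i, rfl⟩
    have := congrFun (congrFun h i) j
    simp only [Matrix.mul_apply, Matrix.transpose_apply, Matrix.zero_apply] at this
    simpa [dotRight, dotProduct] using this
  exact this hu

lemma gram_eq_zero_of_hull {F : Type*} [Field F] {k : ℕ} {ι : Type*} [Fintype ι]
    {Ct : Submodule F (ι → F)} {M : Matrix (Fin k) ι F}
    (hgen : IsGenMat Ct M) (hh : Module.finrank F (hullE Ct) = k) :
    M * Mᵀ = 0 := by
  have hCt : Module.finrank F Ct = k := by
    rw [← hgen.2, finrank_span_eq_card hgen.1, Fintype.card_fin]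
  have hle : hullE Ct ≤ Ct := inf_le_left (b := dualE Ct)
  have heq : hullE Ct = Ct := Submodule.eq_of_le_of_finrank_le hle (by rw [hCt, hh])
  have hdual : Ct ≤ dualE Ct := by
    have h2 : hullE Ct ≤ dualE Ct := inf_le_right (a := Ct)
    rwa [heq] at h2
  ext i j
  have hi : M i ∈ Ct := by rw [← hgen.2]; exact Submodule.subset_span ⟨i, rfl⟩
  have hj : M j ∈ Ct := by rw [← hgen.2]; exact Submodule.subset_span ⟨j, rfl⟩
  have := hdual hj (M i) hi
  simpa [Matrix.mul_apply, dotProduct, mul_comm] using this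

set_option linter.unreachableTactic false in
set_option linter.unusedTactic false in
lemma sum_ite_mul' {F : Type*} [Field F] {m : ℕ} (c₁ c₂ : ℕ) (x y : F) :
    ∑ j : Fin m, (if (j : ℕ) = c₁ then x else 0) * (if (j : ℕ) = c₂ then y else 0)
      = if c₁ = c₂ ∧ c₁ < m then x * y else 0 := by
  by_cases h : c₁ < m
  · rw [Finset.sum_eq_single (⟨c₁, h⟩ : Fin m)]
    · simp only [if_pos rfl]
      by_cases he : c₁ = c₂
      · subst he; simp [h]
      · simp [he]
    · intro j _ hj
      rw [if_neg, zero_mul]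
      exact fun hc => hj (Fin.ext hc)
    · simp
  · rw [if_neg (by tauto)]
    apply Finset.sum_eq_zero
    intro j _
    rw [if_neg, zero_mul]
    omega

def alphaV {F : Type*} [Field F] (k r : ℕ) (a : F) : Fin k → F :=
  fun i => if (i : ℕ) + 1 < r then 1 else if (i : ℕ) + 1 = r then a else 0

def betaV {F : Type*} [Field F] (k r : ℕ) (b : F) : Fin k → F :=
  fun i => if (i : ℕ) + 1 = r then b else 0

def D0 {F : Type*} [Field F] (k r : ℕ) (a b : F) : Matrix (Fin k) (Fin (r + 1)) F :=
  Matrix.of fun i j =>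
    (if (j : ℕ) = (i : ℕ) then alphaV k r a i else 0) +
    (if (j : ℕ) = (i : ℕ) + 1 then betaV k r b i else 0)

set_option linter.unreachableTactic false in
set_option linter.unusedTactic false in
lemma D0_mul_transpose {F : Type*} [Field F] (k r : ℕ) (a b z : F) (hab : a * a + b * b = z) :
    D0 (F := F) k r a b * (D0 (F := F) k r a b)ᵀ =
      Matrix.of (fun i j : Fin k =>
        if i = j then
          (if (i : ℕ) + 1 < r then (1 : F)
           else if (i : ℕ) + 1 = r then z else 0)
        else 0) := by
  ext i i'
  simp only [Matrix.mul_apply, Matrix.transpose_apply, Matrix.of_apply, D0]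
  have expand : ∀ j : Fin (r + 1),
      ((if (j : ℕ) = (i : ℕ) then alphaV k r a i else 0) +
        (if (j : ℕ) = (i : ℕ) + 1 then betaV k r b i else 0)) *
      ((if (j : ℕ) = (i' : ℕ) then alphaV k r a i' else 0) +
        (if (j : ℕ) = (i' : ℕ) + 1 then betaV k r b i' else 0))
      = (if (j : ℕ) = (i : ℕ) then alphaV k r a i else 0) *
          (if (j : ℕ) = (i' : ℕ) then alphaV k r a i' else 0)
        + (if (j : ℕ) = (i : ℕ) then alphaV k r a i else 0) *
          (if (j : ℕ) = (i' : ℕ) + 1 then betaV k r b i' else 0)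
        + (if (j : ℕ) = (i : ℕ) + 1 then betaV k r b i else 0) *
          (if (j : ℕ) = (i' : ℕ) then alphaV k r a i' else 0)
        + (if (j : ℕ) = (i : ℕ) + 1 then betaV k r b i else 0) *
          (if (j : ℕ) = (i' : ℕ) + 1 then betaV k r b i' else 0) := by
    intro j; ring
  simp only [expand]
  rw [Finset.sum_add_distrib, Finset.sum_add_distrib, Finset.sum_add_distrib,
    sum_ite_mul', sum_ite_mul', sum_ite_mul', sum_ite_mul']
  simp only [Fin.ext_iff, alphaV, betaV]
  split_ifs <;> first | omega | (subst hab; ring) | ring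

open Polynomial in
lemma exists_sq_add_sq' {F : Type*} [Field F] [Fintype F] (hodd : Odd (Fintype.card F)) (z : F) :
    ∃ a b : F, a * a + b * b = z := by
  obtain ⟨a, b, hab⟩ :=
    FiniteField.exists_root_sum_quadratic (f := (X ^ 2 : F[X]))
      (g := (X ^ 2 - C z : F[X])) (degree_X_pow 2)
      (degree_X_pow_sub_C (by norm_num) _) (Nat.odd_iff.1 hodd)
  refine ⟨a, b, ?_⟩
  simp only [eval_pow, eval_X, eval_sub, eval_C] at hab
  linear_combination hab

lemma exists_unit_mul {F : Type*} [Field F] {k n : ℕ} {C : Submodule F (Fin n → F)}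
    {G G' : Matrix (Fin k) (Fin n) F} (hG : IsGenMat C G) (hG' : IsGenMat C G') :
    ∃ U : Matrix (Fin k) (Fin k) F, IsUnit U ∧ G' = U * G := by
  have hmem : ∀ i, ∃ c : Fin k → F, ∑ j, c j • G j = G' i := by
    intro i
    have : G' i ∈ Submodule.span F (Set.range fun j => G j) := by
      rw [hG.2, ← hG'.2]
      exact Submodule.subset_span ⟨i, rfl⟩
    exact (Submodule.mem_span_range_iff_exists_fun F).1 this
  choose U hU using hmem
  have hUG : G' = Matrix.of U * G := by
    ext i l
    rw [Matrix.mul_apply, ← hU i]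
    simp [Finset.sum_apply]
  refine ⟨Matrix.of U, ?_, hUG⟩
  rw [← Matrix.vecMul_injective_iff_isUnit]
  intro x y hxy
  simp only at hxy
  have h2 : x ᵥ* G' = y ᵥ* G' := by
    rw [hUG, ← Matrix.vecMul_vecMul, ← Matrix.vecMul_vecMul, hxy]
  have inj : Function.Injective (fun v => v ᵥ* G') := Matrix.vecMul_injective_iff.2 hG'.1
  exact inj h2

lemma rank_congr' {F : Type*} [Field F] {k : ℕ} (M A : Matrix (Fin k) (Fin k) F)
    (hM : IsUnit M) : (M * A * Mᵀ).rank = A.rank := by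
  have h1 : IsUnit M.det := (Matrix.isUnit_iff_isUnit_det M).1 hM
  have h2 : IsUnit Mᵀ.det := by rwa [Matrix.det_transpose]
  rw [Matrix.rank_mul_eq_left_of_isUnit_det Mᵀ (M * A) h2,
    Matrix.rank_mul_eq_right_of_isUnit_det M A h1]

lemma rank_neg' {F : Type*} [Field F] {k : ℕ} (A : Matrix (Fin k) (Fin k) F) :
    (-A).rank = A.rank := by
  have h : -A = A * (-1) := by simp
  have hdet : IsUnit (-1 : Matrix (Fin k) (Fin k) F).det := by
    rw [Matrix.det_neg, Matrix.det_one, mul_one]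
    exact (isUnit_one (M := F)).neg.pow _
  rw [h, Matrix.rank_mul_eq_left_of_isUnit_det _ _ hdet]

lemma sandwich {F : Type*} [Field F] {k : ℕ} {ι : Type*} [Fintype ι]
    (P : Matrix (Fin k) (Fin k) F) (D : Matrix (Fin k) ι F) :
    (P * D) * (P * D)ᵀ = P * (D * Dᵀ) * Pᵀ := by
  rw [Matrix.transpose_mul, ← Matrix.mul_assoc, Matrix.mul_assoc P D Dᵀ]

lemma unsandwich {F : Type*} [Field F] {k : ℕ} (M X : Matrix (Fin k) (Fin k) F)
    (hdet : IsUnit M.det) : M⁻¹ * (M * X * Mᵀ) * M⁻¹ᵀ = X := by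
  have hdetT : IsUnit Mᵀ.det := by rwa [Matrix.det_transpose]
  rw [Matrix.transpose_nonsing_inv, ← Matrix.mul_assoc M⁻¹ (M * X) Mᵀ,
    ← Matrix.mul_assoc M⁻¹ M X, Matrix.nonsing_inv_mul M hdet, Matrix.one_mul,
    Matrix.mul_assoc X Mᵀ Mᵀ⁻¹, Matrix.mul_nonsing_inv Mᵀ hdetT, Matrix.mul_one]

lemma conj_conj {F : Type*} [Field F] {k : ℕ} (M U X : Matrix (Fin k) (Fin k) F)
    (hU : IsUnit U.det) : (M * U⁻¹) * (U * X * Uᵀ) * (M * U⁻¹)ᵀ = M * X * Mᵀ := by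
  rw [Matrix.transpose_mul, Matrix.mul_assoc M U⁻¹ (U * X * Uᵀ),
    Matrix.mul_assoc M (U⁻¹ * (U * X * Uᵀ)) (U⁻¹ᵀ * Mᵀ),
    ← Matrix.mul_assoc (U⁻¹ * (U * X * Uᵀ)) U⁻¹ᵀ Mᵀ, unsandwich U X hU,
    ← Matrix.mul_assoc]

lemma prod_w {F : Type*} [Field F] (r : ℕ) (hr : 1 ≤ r) (z : F) :
    (∏ p : Fin r, (if (p : ℕ) + 1 < r then (1 : F) else z)) = z := by
  obtain ⟨m, rfl⟩ : ∃ m, r = m + 1 := ⟨r - 1, by omega⟩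
  rw [Fin.prod_univ_castSucc]
  have h1 : ∀ p : Fin m, (if ((Fin.castSucc p : Fin (m+1)) : ℕ) + 1 < m + 1 then (1 : F) else z)
      = 1 := by
    intro p
    rw [if_pos]
    simp only [Fin.coe_castSucc]
    omega
  simp only [h1, Finset.prod_const_one, one_mul]
  rw [if_neg]
  simp only [Fin.val_last]
  omega

end Aux

/-- Let `q` be an odd prime power and `C` an `[n,k]` code over `F_q`
of type `(E_{o,ns})` with `ℓ = dim Hull_E(C) < k`.  Then the length of the shortest
`k`-dimensional Euclidean hull embeddings of `C` (the shortest Euclidean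
self-orthogonal embeddings preserving dimension `k`) is `n + k - ℓ + 1`. -/
theorem shortest_type_Eons_self_orthogonal {F : Type*} [Field F] [Fintype F]
    (hodd : Odd (Fintype.card F))
    {n k ℓ : ℕ} (C : Submodule F (Fin n → F)) (hk : Module.finrank F C = k)
    (G : Matrix (Fin k) (Fin n) F) (hG : IsGenMat C G)
    (htype : ∃ z : F, z ≠ 0 ∧ ¬ IsSquare z ∧ MatCongruent (-(G * Gᵀ))
      (Matrix.of fun (i j : Fin k) =>
        if i = j then
          (if (i : ℕ) + 1 < (G * Gᵀ).rank then (1 : F)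
           else if (i : ℕ) + 1 = (G * Gᵀ).rank then z else 0)
        else 0))
    (hℓ : Module.finrank F (hullE C) = ℓ) (hlt : ℓ < k) :
    IsLeast {s : ℕ | ∃ Ct : Submodule F ((Fin n ⊕ Fin s) → F), IsHullEmbE k C Ct k}
      (k - ℓ + 1) := by
  classical
  obtain ⟨z, hz0, hznsq, M, hMunit, hMeq⟩ := htype
  have hMdet : IsUnit M.det := (Matrix.isUnit_iff_isUnit_det M).1 hMunit
  have hsum := finrank_hullE_add_rank G hG.1
  rw [hG.2, hℓ] at hsum
  have hrk : (G * Gᵀ).rank = k - ℓ := by omega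
  have hr1 : 1 ≤ k - ℓ := by omega
  have hrkk : k - ℓ ≤ k := by omega
  rw [hrk] at hMeq
  set Δ : Matrix (Fin k) (Fin k) F := Matrix.of (fun i j : Fin k =>
      if i = j then
        (if (i : ℕ) + 1 < k - ℓ then (1 : F)
         else if (i : ℕ) + 1 = k - ℓ then z else 0)
      else 0) with hΔ
  have hΔrank : Δ.rank = k - ℓ := by
    rw [← hMeq, rank_congr' M _ hMunit, rank_neg', hrk]
  constructor
  · -- membership: construct a self-orthogonal embedding of length k - ℓ + 1
    obtain ⟨a, b, hab⟩ := exists_sq_add_sq' hodd z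
    set D : Matrix (Fin k) (Fin (k - ℓ + 1)) F := M⁻¹ * D0 k (k - ℓ) a b with hD
    have hgram : D * Dᵀ = -(G * Gᵀ) := by
      rw [hD, sandwich M⁻¹ (D0 k (k - ℓ) a b), D0_mul_transpose k (k - ℓ) a b z hab,
        ← hΔ, ← hMeq, unsandwich M _ hMdet]
    set Mf : Matrix (Fin k) ((Fin n ⊕ Fin (k - ℓ + 1))) F := Matrix.fromCols G D with hMf
    have hzero : Mf * Mfᵀ = 0 := by
      rw [hMf, Matrix.transpose_fromCols, Matrix.fromCols_mul_fromRows, hgram,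
        add_neg_cancel]
    have hind : LinearIndependent F (fun i => Mf i) := by
      apply LinearIndependent.of_comp (LinearMap.funLeft F F Sum.inl)
      have hcomp : ((LinearMap.funLeft F F Sum.inl) ∘ fun i => Mf i) = fun i => G i := by
        funext i
        funext j
        simp [hMf, LinearMap.funLeft_apply, Matrix.fromCols_apply_inl]
      rw [hcomp]
      exact hG.1
    refine ⟨Submodule.span F (Set.range fun i => Mf i), ?_, G, D, hG, hind, rfl⟩
    have hhull : hullE (Submodule.span F (Set.range fun i => Mf i))
        = Submodule.span F (Set.range fun i => Mf i) :=
      inf_eq_left.2 (span_le_dualE hzero)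
    rw [hhull, finrank_span_eq_card hind, Fintype.card_fin]
  · -- lower bound
    rintro s ⟨Ct, hhull, G', D', hG', hCt⟩
    have hzero := gram_eq_zero_of_hull hCt hhull
    rw [Matrix.transpose_fromCols, Matrix.fromCols_mul_fromRows] at hzero
    have hDD : D' * D'ᵀ = -(G' * G'ᵀ) := eq_neg_of_add_eq_zero_right hzero
    obtain ⟨U, hUunit, hUG⟩ := exists_unit_mul hG hG'
    have hUdet : IsUnit U.det := (Matrix.isUnit_iff_isUnit_det U).1 hUunit
    set E : Matrix (Fin k) (Fin s) F := M * U⁻¹ * D' with hE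
    have hEE : E * Eᵀ = Δ := by
      rw [hE, sandwich (M * U⁻¹) D', hDD, hUG, sandwich U G, Matrix.mul_neg, Matrix.neg_mul,
        conj_conj M U (G * Gᵀ) hUdet, ← hMeq, Matrix.mul_neg, Matrix.neg_mul]
    -- first: s ≥ k - ℓ
    have hs1 : k - ℓ ≤ s := by
      have h1 : Δ.rank ≤ E.rank := by rw [← hEE]; exact Matrix.rank_mul_le_left E Eᵀ
      have h2 : E.rank ≤ s := by
        have := Matrix.rank_le_card_width E
        simpa using this
      omega
    -- now rule out s = k - ℓ
    by_contra hcon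
    push_neg at hcon
    have hseq : s = k - ℓ := by omega
    subst hseq
    set B : Matrix (Fin (k - ℓ)) (Fin (k - ℓ)) F :=
      Matrix.of (fun p q => E (Fin.castLE hrkk p) q) with hB
    have hBB : B * Bᵀ = Matrix.diagonal (fun p : Fin (k - ℓ) =>
        if (p : ℕ) + 1 < k - ℓ then (1 : F) else z) := by
      ext p q
      have h1 : (B * Bᵀ) p q = (E * Eᵀ) (Fin.castLE hrkk p) (Fin.castLE hrkk q) := by
        simp [hB, Matrix.mul_apply]
      rw [h1, hEE, hΔ]
      simp only [Matrix.of_apply, Matrix.diagonal_apply]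
      rcases eq_or_ne p q with h | h
      · subst h
        simp only [if_pos rfl, Fin.coe_castLE]
        have hlt : (p : ℕ) < k - ℓ := p.isLt
        split_ifs <;> first | rfl | omega
      · rw [if_neg, if_neg h]
        intro hc
        exact h (Fin.castLE_injective hrkk hc)
    have hzsq : IsSquare z := by
      refine ⟨B.det, ?_⟩
      have : (B * Bᵀ).det = z := by
        rw [hBB, Matrix.det_diagonal, prod_w (k - ℓ) hr1 z]
      rw [← this, Matrix.det_mul, Matrix.det_transpose]
    exact hznsq hzsq
end

section
/- Let q = 2^m and let C be an [n,k] linear code over F_q of type (E_{e,na}), with ℓ = dim Hull_E(C) and ℓ < t ≤ k. Then the length of the shortest t-dimensional Euclidean hull embeddings of C is n + t − ℓ. -/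
open Matrix

/-- A square matrix is alternating if its diagonal vanishes and it is antisymmetric. -/
def IsAltMat {F : Type*} [Field F] {κ : Type*} (M : Matrix κ κ F) : Prop :=
  (∀ i, M i i = 0) ∧ ∀ i j, M i j = - M j i


section Aux
variable {F : Type*} [Field F]

/-- rank of vecMulVec is at most one. -/
lemma rank_vecMulVec_le_one {k : ℕ} (u v : Fin k → F) :
    (Matrix.vecMulVec u v).rank ≤ 1 := by
  classical
  have hrange : LinearMap.range (Matrix.vecMulVec u v).mulVecLin ≤ Submodule.span F {u} := by
    rintro w ⟨y, rfl⟩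
    have : (Matrix.vecMulVec u v).mulVecLin y = (v ⬝ᵥ y) • u := by
      ext i
      simp [Matrix.mulVecLin_apply, Matrix.mulVec, Matrix.vecMulVec_apply, dotProduct,
        Finset.sum_mul, Finset.mul_sum, mul_assoc, mul_comm, mul_left_comm]
    rw [this]
    exact Submodule.smul_mem _ _ (Submodule.mem_span_singleton_self u)
  calc (Matrix.vecMulVec u v).rank ≤ Module.finrank F (Submodule.span F {u}) :=
        Submodule.finrank_mono hrange
    _ ≤ 1 := by simpa using finrank_span_le_card ({u} : Set (Fin k → F))


lemma matrix_rank_add_le {k : ℕ} {ι : Type*} [Fintype ι]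
    (A B : Matrix (Fin k) ι F) : (A + B).rank ≤ A.rank + B.rank := by
  classical
  have hrange : LinearMap.range (A + B).mulVecLin ≤
      LinearMap.range A.mulVecLin ⊔ LinearMap.range B.mulVecLin := by
    rintro w ⟨y, rfl⟩
    rw [Matrix.mulVecLin_add]
    exact Submodule.add_mem_sup ⟨y, rfl⟩ ⟨y, rfl⟩
  calc (A + B).rank ≤ Module.finrank F
        ↥(LinearMap.range A.mulVecLin ⊔ LinearMap.range B.mulVecLin) :=
        Submodule.finrank_mono hrange
    _ ≤ A.rank + B.rank := Submodule.finrank_add_le_finrank_add_finrank _ _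

/-- The hull of a code with generator matrix `M` (rows lin. independent, spanning). -/
lemma finrank_hullE_add_rank_s17 {k : ℕ} {ι : Type*} [Fintype ι] [DecidableEq ι]
    (C : Submodule F (ι → F)) (M : Matrix (Fin k) ι F) (h : IsGenMat C M) :
    Module.finrank F (hullE C) + (M * Mᵀ).rank = k := by
  classical
  have hmem : ∀ v, v ∈ C ↔ ∃ x, M.vecMulLinear x = v := by
    intro v
    rw [← h.2]
    constructor
    · intro hv
      have : v ∈ LinearMap.range M.vecMulLinear := by
        rw [range_vecMulLinear]
        exact hv
      exact this
    · rintro ⟨x, rfl⟩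
      have : M.vecMulLinear x ∈ LinearMap.range M.vecMulLinear := ⟨x, rfl⟩
      rwa [range_vecMulLinear] at this
  have key : hullE C = Submodule.map M.vecMulLinear (LinearMap.ker (M * Mᵀ).mulVecLin) := by
    apply le_antisymm
    · rintro v ⟨hvC, hvD⟩
      simp only [SetLike.mem_coe] at hvC hvD ⊢
      obtain ⟨x, rfl⟩ := (hmem v).mp hvC
      refine Submodule.mem_map.mpr ⟨x, ?_, rfl⟩
      rw [LinearMap.mem_ker]
      have hMv : M *ᵥ (M.vecMulLinear x) = 0 := by
        have hall : ∀ y : Fin k → F, y ⬝ᵥ (M *ᵥ (M.vecMulLinear x)) = 0 := by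
          intro y
          rw [Matrix.dotProduct_mulVec]
          exact hvD (M.vecMulLinear y) ((hmem _).mpr ⟨y, rfl⟩)
        ext i
        have := hall (Pi.single i 1)
        rwa [single_dotProduct, one_mul] at this
      rw [Matrix.mulVecLin_apply]
      calc (M * Mᵀ) *ᵥ x = M *ᵥ (Mᵀ *ᵥ x) := (Matrix.mulVec_mulVec x M Mᵀ).symm
        _ = M *ᵥ (M.vecMulLinear x) := by rw [Matrix.mulVec_transpose]; rfl
        _ = 0 := hMv
    · intro v hv
      obtain ⟨x, hx, rfl⟩ := Submodule.mem_map.mp hv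
      rw [LinearMap.mem_ker, Matrix.mulVecLin_apply] at hx
      refine Submodule.mem_inf.mpr ⟨(hmem _).mpr ⟨x, rfl⟩, ?_⟩
      intro u huC
      obtain ⟨y, rfl⟩ := (hmem u).mp huC
      have hx' : x ᵥ* (M * Mᵀ) = 0 := by
        rw [← Matrix.mulVec_transpose, Matrix.transpose_mul, Matrix.transpose_transpose, hx]
      rw [Matrix.vecMulLinear_apply, Matrix.vecMulLinear_apply, dotProduct_comm,
        ← Matrix.mulVec_transpose M y, Matrix.dotProduct_mulVec, Matrix.vecMul_vecMul, hx',
        zero_dotProduct]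
  have hinj : Function.Injective M.vecMulLinear := by
    have : Function.Injective M.vecMul := Matrix.vecMul_injective_iff.mpr h.1
    exact this
  rw [key]
  have e := (Submodule.equivMapOfInjective M.vecMulLinear hinj
    (LinearMap.ker (M * Mᵀ).mulVecLin)).symm.finrank_eq
  rw [e]
  have hrn := LinearMap.finrank_range_add_finrank_ker ((M * Mᵀ).mulVecLin)
  rw [Module.finrank_pi F] at hrn
  simp only [Fintype.card_fin] at hrn
  have : (M * Mᵀ).rank = Module.finrank F (LinearMap.range (M * Mᵀ).mulVecLin) := rfl
  omega
end Aux

section CharTwoAux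
variable {F : Type*} [Field F]

lemma charP_two_of_card [Fintype F] (m : ℕ) (hm : 0 < m)
    (hcard : Fintype.card F = 2 ^ m) : CharP F 2 := by
  have hp : (ringChar F).Prime := CharP.char_is_prime F (ringChar F)
  obtain ⟨n, hn⟩ := FiniteField.card F (ringChar F)
  have h2 : ringChar F = 2 := by
    have hdvd : ringChar F ∣ 2 ^ m := by
      rw [← hcard, hn.2]
      exact dvd_pow_self _ n.pos.ne'
    have := hp.dvd_of_dvd_pow (n := m) hdvd
    exact (Nat.prime_dvd_prime_iff_eq hp Nat.prime_two).mp this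
  rw [← h2]
  exact ringChar.charP F

lemma exists_sq_eq [Finite F] [CharP F 2] (a : F) : ∃ b : F, b * b = a := by
  have hinj : Function.Injective (fun x : F => x * x) := by
    intro x y hxy
    simp only at hxy
    have : (x + y) * (x + y) = 0 := by
      rw [CharTwo.add_mul_self, hxy, CharTwo.add_self_eq_zero]
    have hxy0 : x + y = 0 := by
      rcases mul_eq_zero.mp this with h | h <;> exact h
    calc x = x + (y + y) := by rw [CharTwo.add_self_eq_zero, add_zero]
      _ = (x + y) + y := by ring
      _ = y := by rw [hxy0, zero_add]
  obtain ⟨b, hb⟩ := (Finite.injective_iff_surjective.mp hinj) a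
  exact ⟨b, hb⟩

lemma char_two_eq_of_add_eq_zero {R : Type*} [Ring R] [CharP R 2] {a b : R}
    (h : a + b = 0) : a = b := by
  have := CharTwo.add_eq_iff_eq_add.mp h
  rwa [zero_add] at this

lemma vecMulVec_mulVec' {k : ℕ} (u v y : Fin k → F) :
    (Matrix.vecMulVec u v) *ᵥ y = (v ⬝ᵥ y) • u := by
  ext i
  simp [Matrix.mulVec, Matrix.vecMulVec_apply, dotProduct, Finset.sum_mul,
    Finset.mul_sum, mul_assoc, mul_comm, mul_left_comm]

/-- char 2: `xᵀ A x` is the square of a linear functional, given square roots of diagonal. -/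
lemma dot_mulVec_self_eq_sq [CharP F 2] {k : ℕ} (A : Matrix (Fin k) (Fin k) F)
    (hA : Aᵀ = A) (α : Fin k → F) (hα : ∀ i, α i * α i = A i i) (x : Fin k → F) :
    x ⬝ᵥ (A *ᵥ x) = (α ⬝ᵥ x) * (α ⬝ᵥ x) := by
  classical
  have hRHS : (α ⬝ᵥ x) * (α ⬝ᵥ x) = ∑ i, x i * (A i i * x i) := by
    rw [dotProduct, CharTwo.sum_mul_self]
    refine Finset.sum_congr rfl fun i _ => ?_
    rw [← hα i]; ring
  have hLHS : x ⬝ᵥ (A *ᵥ x) = ∑ p ∈ Finset.univ ×ˢ Finset.univ,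
      x p.1 * (A p.1 p.2 * x p.2) := by
    rw [Finset.sum_product]
    simp [dotProduct, Matrix.mulVec, Finset.mul_sum]
  rw [hLHS, hRHS, ← Finset.sum_filter_add_sum_filter_not (Finset.univ ×ˢ Finset.univ)
    (fun p => p.1 = p.2)]
  have hdiag : ∑ p ∈ (Finset.univ ×ˢ Finset.univ).filter (fun p : Fin k × Fin k => p.1 = p.2),
      x p.1 * (A p.1 p.2 * x p.2) = ∑ i, x i * (A i i * x i) := by
    refine Finset.sum_nbij' (fun p => p.1) (fun i => (i, i)) ?_ ?_ ?_ ?_ ?_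
    · intro p hp; exact Finset.mem_univ _
    · intro i _; simp
    · intro p hp
      have := (Finset.mem_filter.mp hp).2
      ext <;> simp [← this]
    · intro i _; rfl
    · intro p hp
      have := (Finset.mem_filter.mp hp).2
      simp [← this]
  have hoff : ∑ p ∈ (Finset.univ ×ˢ Finset.univ).filter
      (fun p : Fin k × Fin k => ¬ p.1 = p.2), x p.1 * (A p.1 p.2 * x p.2) = 0 := by
    refine Finset.sum_involution (fun p _ => (p.2, p.1)) ?_ ?_ ?_ ?_
    · intro p hp
      have hsymm : A p.2 p.1 = A p.1 p.2 := by
        conv_lhs => rw [← hA, Matrix.transpose_apply]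
      simp only [hsymm]
      have : x p.1 * (A p.1 p.2 * x p.2) = x p.2 * (A p.1 p.2 * x p.1) := by ring
      rw [← this, CharTwo.add_self_eq_zero]
    · intro p hp _
      have := (Finset.mem_filter.mp hp).2
      intro hc
      apply this
      have := congrArg Prod.fst hc
      simp at this
      exact this.symm
    · intro p hp
      have h1 := (Finset.mem_filter.mp hp).2
      refine Finset.mem_filter.mpr ⟨by simp, ?_⟩
      simp only [ne_eq]
      exact fun hc => h1 hc.symm
    · intro p hp; rfl
  rw [hdiag, hoff, add_zero]

end CharTwoAux

section RankReduce
variable {F : Type*} [Field F]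

lemma rank_reduce [CharP F 2] {k : ℕ} (A : Matrix (Fin k) (Fin k) F) (hA : Aᵀ = A)
    (x : Fin k → F) (c : F) (hc : c * (x ⬝ᵥ (A *ᵥ x)) = 1) :
    (A + c • Matrix.vecMulVec (A *ᵥ x) (A *ᵥ x)).rank + 1 = A.rank := by
  classical
  set u : Fin k → F := A *ᵥ x with hu
  set A' : Matrix (Fin k) (Fin k) F := A + c • Matrix.vecMulVec u u with hA'
  set q : F := x ⬝ᵥ u with hqdef
  have hq : q ≠ 0 := by
    intro h0
    rw [h0, mul_zero] at hc
    exact zero_ne_one hc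
  -- symmetric dot product identity
  have hsd : ∀ z : Fin k → F, x ⬝ᵥ (A *ᵥ z) = u ⬝ᵥ z := by
    intro z
    rw [Matrix.dotProduct_mulVec]
    congr 1
    rw [← Matrix.mulVec_transpose, hA]
  -- A' action
  have hA'v : ∀ y : Fin k → F, A' *ᵥ y = A *ᵥ (y + (c * (u ⬝ᵥ y)) • x) := by
    intro y
    rw [Matrix.mulVec_add, Matrix.mulVec_smul]
    rw [hA', Matrix.add_mulVec, Matrix.smul_mulVec, vecMulVec_mulVec']
    rw [smul_smul, ← hu]
  -- range inclusion
  have hle : LinearMap.range A'.mulVecLin ≤ LinearMap.range A.mulVecLin := by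
    rintro w ⟨y, rfl⟩
    exact ⟨y + (c * (u ⬝ᵥ y)) • x, (hA'v y).symm⟩
  -- u not in range A'
  have hu_not : u ∉ LinearMap.range A'.mulVecLin := by
    rintro ⟨y, hy⟩
    rw [Matrix.mulVecLin_apply, hA'v y] at hy
    have h2 : x ⬝ᵥ (A *ᵥ (y + (c * (u ⬝ᵥ y)) • x)) = 0 := by
      rw [hsd, dotProduct_add, dotProduct_smul, smul_eq_mul,
        dotProduct_comm u x, ← hqdef]
      have : c * (u ⬝ᵥ y) * q = u ⬝ᵥ y := by
        calc c * (u ⬝ᵥ y) * q = (u ⬝ᵥ y) * (c * q) := by ring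
          _ = u ⬝ᵥ y := by rw [hc, mul_one]
      rw [this, CharTwo.add_self_eq_zero]
    rw [hy] at h2
    exact hq (by rw [hqdef]; exact h2)
  have hu_in : u ∈ LinearMap.range A.mulVecLin := ⟨x, rfl⟩
  -- strict inequality
  have hlt : LinearMap.range A'.mulVecLin < LinearMap.range A.mulVecLin :=
    lt_of_le_of_ne hle (fun h => hu_not (h ▸ hu_in))
  have hrank_lt : A'.rank < A.rank := Submodule.finrank_lt_finrank_of_lt hlt
  -- other direction
  have hAeq : A = A' + c • Matrix.vecMulVec u u := by
    ext i j
    simp only [hA', Matrix.add_apply, Matrix.smul_apply, smul_eq_mul]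
    rw [add_assoc, CharTwo.add_self_eq_zero, add_zero]
  have hsmul : c • Matrix.vecMulVec u u = Matrix.vecMulVec (c • u) u := by
    ext i j
    simp [Matrix.vecMulVec_apply, mul_assoc]
  have hrank_le : A.rank ≤ A'.rank + 1 := by
    calc A.rank = (A' + c • Matrix.vecMulVec u u).rank := by rw [← hAeq]
      _ ≤ A'.rank + (c • Matrix.vecMulVec u u).rank := matrix_rank_add_le _ _
      _ ≤ A'.rank + 1 := by
          rw [hsmul]
          exact Nat.add_le_add_left (rank_vecMulVec_le_one _ _) _
  omega

end RankReduce

section Step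
variable {F : Type*} [Field F]

lemma step_reduce [Fintype F] [CharP F 2] {k : ℕ} (A : Matrix (Fin k) (Fin k) F)
    (hA : Aᵀ = A) (hna : ∃ i, A i i ≠ 0) :
    ∃ d : Fin k → F, ((A + Matrix.vecMulVec d d)ᵀ = A + Matrix.vecMulVec d d) ∧
      (A + Matrix.vecMulVec d d).rank + 1 = A.rank ∧
      (2 ≤ A.rank → ∃ i, (A + Matrix.vecMulVec d d) i i ≠ 0) := by
  classical
  -- square roots of the diagonal
  choose α hα using fun i => exists_sq_eq (A i i)
  obtain ⟨i₀, hi₀⟩ := hna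
  have hαi₀ : α i₀ ≠ 0 := fun h => hi₀ (by rw [← hα i₀, h, mul_zero])
  -- choose x
  have hxex : ∃ x : Fin k → F, α ⬝ᵥ x ≠ 0 ∧
      (2 ≤ A.rank → (A + Matrix.vecMulVec α α) *ᵥ x ≠ 0) := by
    by_cases hr : 2 ≤ A.rank
    · -- the kernel of A + ααᵀ is not everything
      set K := LinearMap.ker (A + Matrix.vecMulVec α α).mulVecLin with hK
      have hKne : K ≠ ⊤ := by
        intro htop
        have hzero : A + Matrix.vecMulVec α α = 0 := by
          ext i j
          have := LinearMap.ker_eq_top.mp htop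
          have happ : (A + Matrix.vecMulVec α α) *ᵥ (Pi.single j 1) = 0 := by
            have : (A + Matrix.vecMulVec α α).mulVecLin (Pi.single j 1) = 0 := by
              rw [this]; rfl
            exact this
          simpa using congrFun happ i
        have hAeq : A = Matrix.vecMulVec α α := by
          ext i j
          have := congrFun (congrFun hzero i) j
          simp only [Matrix.add_apply, Matrix.zero_apply] at this
          exact char_two_eq_of_add_eq_zero this
        have : A.rank ≤ 1 := hAeq ▸ rank_vecMulVec_le_one α α
        omega
      obtain ⟨v, hv⟩ : ∃ v, v ∉ K := by
        by_contra h
        push_neg at h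
        exact hKne (Submodule.eq_top_iff'.mpr h)
      have hvne : (A + Matrix.vecMulVec α α) *ᵥ v ≠ 0 := by
        intro h0
        exact hv (LinearMap.mem_ker.mpr (by rw [Matrix.mulVecLin_apply]; exact h0))
      by_cases hαv : α ⬝ᵥ v ≠ 0
      · exact ⟨v, hαv, fun _ => hvne⟩
      · push_neg at hαv
        set w : Fin k → F := Pi.single i₀ 1 with hw
        have hαw : α ⬝ᵥ w = α i₀ := by rw [hw, dotProduct_single, mul_one]
        by_cases hwK : w ∈ K
        · refine ⟨w + v, ?_, fun _ => ?_⟩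
          · rw [dotProduct_add, hαw, hαv, add_zero]; exact hαi₀
          · intro h0
            have : w + v ∈ K := LinearMap.mem_ker.mpr
              (by rw [Matrix.mulVecLin_apply]; exact h0)
            have hvK : v ∈ K := by
              have := K.sub_mem this hwK
              have heq : w + v - w = v := by abel
              rwa [heq] at this
            exact hv hvK
        · refine ⟨w, by rw [hαw]; exact hαi₀, fun _ => ?_⟩
          intro h0
          exact hwK (LinearMap.mem_ker.mpr (by rw [Matrix.mulVecLin_apply]; exact h0))
    · refine ⟨Pi.single i₀ 1, ?_, fun h => absurd h hr⟩
      rw [dotProduct_single, mul_one]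
      exact hαi₀
  obtain ⟨x, hγ, hx2⟩ := hxex
  set γ : F := α ⬝ᵥ x with hγdef
  set u : Fin k → F := A *ᵥ x with hu
  have hq : x ⬝ᵥ u = γ * γ := dot_mulVec_self_eq_sq A hA α hα x
  -- scalar
  set c : F := γ⁻¹ * γ⁻¹ with hcdef
  have hc : c * (x ⬝ᵥ u) = 1 := by
    rw [hq, hcdef]
    field_simp
  set d : Fin k → F := γ⁻¹ • u with hd
  have hdd : Matrix.vecMulVec d d = c • Matrix.vecMulVec u u := by
    ext i j
    simp only [hd, Matrix.vecMulVec_apply, Pi.smul_apply, smul_eq_mul, Matrix.smul_apply, hcdef]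
    ring
  have hrank : (A + Matrix.vecMulVec d d).rank + 1 = A.rank := by
    rw [hdd]
    exact rank_reduce A hA x c hc
  have hsymm : (A + Matrix.vecMulVec d d)ᵀ = A + Matrix.vecMulVec d d := by
    rw [Matrix.transpose_add, hA]
    congr 1
    ext i j
    simp [Matrix.transpose_apply, Matrix.vecMulVec_apply, mul_comm]
  refine ⟨d, hsymm, hrank, ?_⟩
  intro hr2
  have hvne := hx2 hr2
  -- diagonal entries
  have hdiag : ∀ i, (A + Matrix.vecMulVec d d) i i = (α i + d i) * (α i + d i) := by
    intro i
    rw [CharTwo.add_mul_self, hα i]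
    simp [Matrix.add_apply, Matrix.vecMulVec_apply]
  by_contra hall
  push_neg at hall
  have hαd : ∀ i, α i = d i := by
    intro i
    have := hall i
    rw [hdiag i] at this
    have h0 : (α i + d i) * (α i + d i) = 0 := this
    have : α i + d i = 0 := by
      rcases mul_eq_zero.mp h0 with h | h <;> exact h
    exact char_two_eq_of_add_eq_zero this
  -- then u = γ • α and x ∈ ker (A + ααᵀ)
  apply hvne
  have hueq : u = γ • α := by
    ext i
    have := hαd i
    rw [hd] at this
    simp only [Pi.smul_apply, smul_eq_mul] at this ⊢
    have hγne : γ ≠ 0 := hγ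
    field_simp at this
    rw [← this]
    ring
  rw [Matrix.add_mulVec, vecMulVec_mulVec', ← hu, ← hγdef, hueq]
  ext i
  simp only [Pi.add_apply, Pi.smul_apply, smul_eq_mul, Pi.zero_apply]
  exact CharTwo.add_self_eq_zero _
end Step

section Multi
variable {F : Type*} [Field F]

lemma multi_reduce [Fintype F] [CharP F 2] (s : ℕ) {k : ℕ}
    (A : Matrix (Fin k) (Fin k) F) (hA : Aᵀ = A) (hna : 1 ≤ s → ∃ i, A i i ≠ 0)
    (hs : s ≤ A.rank) :
    ∃ d : Fin s → Fin k → F,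
      (A + ∑ j, Matrix.vecMulVec (d j) (d j)).rank + s = A.rank := by
  classical
  induction s generalizing A with
  | zero =>
    refine ⟨fun j => 0, ?_⟩
    simp
  | succ s ih =>
    obtain ⟨d₀, hsymm', hrank', hna'⟩ := step_reduce A hA (hna (Nat.le_add_left 1 s))
    set A' := A + Matrix.vecMulVec d₀ d₀ with hA'def
    have hna'' : 1 ≤ s → ∃ i, A' i i ≠ 0 := by
      intro hs1
      exact hna' (by omega)
    obtain ⟨d', hd'⟩ := ih A' hsymm' hna'' (by omega)
    refine ⟨(Fin.cons d₀ d' : Fin (s+1) → Fin k → F), ?_⟩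
    have hsum : ∑ j : Fin (s + 1), Matrix.vecMulVec ((Fin.cons d₀ d' : Fin (s+1) → Fin k → F) j) ((Fin.cons d₀ d' : Fin (s+1) → Fin k → F) j)
        = Matrix.vecMulVec d₀ d₀ + ∑ j : Fin s, Matrix.vecMulVec (d' j) (d' j) := by
      rw [Fin.sum_univ_succ]
      simp [Fin.cons_zero, Fin.cons_succ]
    rw [hsum, ← add_assoc A (Matrix.vecMulVec d₀ d₀), ← hA'def]
    omega

lemma multi_reduce_matrix [Fintype F] [CharP F 2] (s : ℕ) {k : ℕ}
    (A : Matrix (Fin k) (Fin k) F) (hA : Aᵀ = A) (hna : 1 ≤ s → ∃ i, A i i ≠ 0)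
    (hs : s ≤ A.rank) :
    ∃ D : Matrix (Fin k) (Fin s) F, (A + D * Dᵀ).rank + s = A.rank := by
  obtain ⟨d, hd⟩ := multi_reduce s A hA hna hs
  refine ⟨Matrix.of fun i j => d j i, ?_⟩
  have : (Matrix.of fun i j => d j i) * (Matrix.of fun i j => d j i)ᵀ
      = ∑ j, Matrix.vecMulVec (d j) (d j) := by
    ext i i'
    simp [Matrix.mul_apply, Matrix.vecMulVec_apply, Matrix.sum_apply]
  rw [this]
  exact hd
end Multi

/-- Let `q = 2 ^ m` and let `C` be an `[n,k]` code over `F_q` of type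
`(E_{e,na})` (i.e. `G * Gᵀ` is non-alternating for a generator matrix `G` of `C`),
with `ℓ = dim Hull_E(C)` and `ℓ < t ≤ k`.  Then the length of the shortest
`t`-dimensional Euclidean hull embeddings of `C` is `n + t - ℓ`. -/
theorem shortest_type_Eena {F : Type*} [Field F] [Fintype F]
    (m : ℕ) (hm : 0 < m) (hcard : Fintype.card F = 2 ^ m)
    {n k ℓ t : ℕ} (C : Submodule F (Fin n → F)) (hk : Module.finrank F C = k)
    (G : Matrix (Fin k) (Fin n) F) (hG : IsGenMat C G)
    (htype : ¬ IsAltMat (G * Gᵀ))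
    (hℓ : Module.finrank F (hullE C) = ℓ) (ht1 : ℓ < t) (ht2 : t ≤ k) :
    IsLeast {s : ℕ | ∃ Ct : Submodule F ((Fin n ⊕ Fin s) → F), IsHullEmbE k C Ct t}
      (t - ℓ) := by  classical
  haveI hchar : CharP F 2 := charP_two_of_card m hm hcard
  have hAsymm : (G * Gᵀ)ᵀ = G * Gᵀ := by
    rw [Matrix.transpose_mul, Matrix.transpose_transpose]
  have hna : ∃ i, (G * Gᵀ) i i ≠ 0 := by
    by_contra hno
    push_neg at hno
    apply htype
    refine ⟨hno, fun i j => ?_⟩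
    rw [CharTwo.neg_eq]
    conv_lhs => rw [← hAsymm, Matrix.transpose_apply]
  have hCrank := finrank_hullE_add_rank_s17 C G hG
  rw [hℓ] at hCrank
  constructor
  · -- membership
    obtain ⟨D, hD⟩ := multi_reduce_matrix (t - ℓ) (G * Gᵀ) hAsymm (fun _ => hna) (by omega)
    set M : Matrix (Fin k) (Fin n ⊕ Fin (t - ℓ)) F := Matrix.fromCols G D with hMdef
    have hMM : M * Mᵀ = G * Gᵀ + D * Dᵀ := by
      rw [hMdef, Matrix.transpose_fromCols, Matrix.fromCols_mul_fromRows]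
    have hindep : LinearIndependent F (fun i => M i) := by
      apply LinearIndependent.of_comp (LinearMap.funLeft F F Sum.inl)
      have hcomp : (⇑(LinearMap.funLeft F F (Sum.inl : Fin n → Fin n ⊕ Fin (t - ℓ))) ∘
          fun i => M i) = fun i => G i := by
        funext i
        funext j
        simp [hMdef, LinearMap.funLeft_apply, Matrix.fromCols_apply_inl]
      rw [hcomp]
      exact hG.1
    set Ct : Submodule F ((Fin n ⊕ Fin (t - ℓ)) → F) :=
      Submodule.span F (Set.range fun i => M i) with hCtdef
    have hGen : IsGenMat Ct M := ⟨hindep, rfl⟩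
    have hCtr := finrank_hullE_add_rank_s17 Ct M hGen
    rw [hMM] at hCtr
    exact ⟨Ct, by omega, G, D, hG, hGen⟩
  · -- lower bound
    rintro s ⟨Ct, hCt1, G', D, hG', hGen'⟩
    have h1 := finrank_hullE_add_rank_s17 C G' hG'
    rw [hℓ] at h1
    have h2 := finrank_hullE_add_rank_s17 Ct _ hGen'
    rw [Matrix.transpose_fromCols, Matrix.fromCols_mul_fromRows, hCt1] at h2
    have h3 : G' * G'ᵀ = (G' * G'ᵀ + D * Dᵀ) + D * Dᵀ := by
      ext i j
      simp only [Matrix.add_apply]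
      rw [add_assoc, CharTwo.add_self_eq_zero, add_zero]
    have h4 : (G' * G'ᵀ).rank ≤ (G' * G'ᵀ + D * Dᵀ).rank + (D * Dᵀ).rank := by
      conv_lhs => rw [h3]
      exact matrix_rank_add_le _ _
    have h5 : (D * Dᵀ).rank ≤ s := by
      refine le_trans (Matrix.rank_mul_le_left D Dᵀ) ?_
      simpa using Matrix.rank_le_card_width D
    omega
end
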